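/- Let p = g_1 ⋯ g_r in F_2[x] with the g_i pairwise coprime and g_i(0) ≠ 0 for all i, N_i = ord(g_i), N = lcm(N_1,...,N_r). If 1 + x^{e_2} + ... + x^{e_{w-1}} + x^{e_w} with 0 < e_2 < ... < e_w < N is a multiple of p, then for each i, setting e_w^{(i)} = e_w mod N_i, the polynomial 1 + x^{e_2} + ... + x^{e_{w-1}} + x^{e_w^{(i)}} is a multiple of g_i, and e_w^{(i)} ≡ e_w^{(j)} (mod gcd(N_i, N_j)) for all i, j. -/
import Mathlib


open Polynomial

/-- The order of a binary polynomial `p`: the least positive `N` with `p ∣ X^N + 1`. -/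
noncomputable def pord (p : Polynomial (ZMod 2)) : ℕ :=
  sInf {N : ℕ | 0 < N ∧ p ∣ X ^ N + 1}

lemma pord_spec (g : Polynomial (ZMod 2)) (h0 : g.eval 0 ≠ 0) :
    0 < pord g ∧ g ∣ X ^ (pord g) + 1 := by
  have hne : {N : ℕ | 0 < N ∧ g ∣ X ^ N + 1}.Nonempty := by
    have hg0 : g ≠ 0 := fun h => h0 (by simp [h])
    by_cases hu : IsUnit g
    · exact ⟨1, one_pos, hu.dvd⟩
    · have hX : ¬ (X : Polynomial (ZMod 2)) ∣ g := by
        rw [Polynomial.X_dvd_iff]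
        simpa [Polynomial.coeff_zero_eq_eval_zero] using h0
      have hcop : IsCoprime (X : Polynomial (ZMod 2)) g :=
        (Polynomial.irreducible_X.coprime_iff_not_dvd).mpr hX
      have hfin : Finite (AdjoinRoot g) := by
        let b := (AdjoinRoot.powerBasis hg0).basis
        exact Finite.of_equiv _ b.repr.toEquiv.symm
      obtain ⟨a, b, hab, heq⟩ :=
        Finite.exists_ne_map_eq_of_infinite (fun n : ℕ => (AdjoinRoot.root g) ^ n)
      wlog hlt : a < b generalizing a b
      · exact this b a hab.symm heq.symm (by omega)
      have heq' : AdjoinRoot.mk g (X ^ b) = AdjoinRoot.mk g (X ^ a) := by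
        simpa [map_pow] using heq.symm
      have hdv : g ∣ X ^ b - X ^ a := by
        rwa [AdjoinRoot.mk_eq_mk] at heq'
      have hfact : (X : Polynomial (ZMod 2)) ^ b - X ^ a = X ^ a * (X ^ (b - a) - 1) := by
        have hba : a + (b - a) = b := by omega
        rw [mul_sub, mul_one, ← pow_add, hba]
      rw [hfact] at hdv
      have hdv2 : g ∣ X ^ (b - a) - 1 :=
        (hcop.pow_left.symm).dvd_of_dvd_mul_left hdv
      refine ⟨b - a, by omega, ?_⟩
      rwa [CharTwo.sub_eq_add] at hdv2
  exact Nat.sInf_mem hne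

theorem stmt_6 (r : ℕ) (g : Fin r → Polynomial (ZMod 2))
    (hcop : ∀ i j, i ≠ j → IsCoprime (g i) (g j))
    (h0 : ∀ i, (g i).eval 0 ≠ 0)
    (p : Polynomial (ZMod 2)) (hp : p = ∏ i, g i)
    (N : ℕ) (hN : N = Finset.univ.lcm (fun i => pord (g i)))
    (k : ℕ) (e : Fin k → ℕ) (hmono : StrictMono e) (hpos : ∀ i, 0 < e i)
    (ew : ℕ) (hgt : ∀ i, e i < ew) (hlt : ew < N)
    (hdvd : p ∣ 1 + (∑ i, (X : Polynomial (ZMod 2)) ^ e i) + X ^ ew) :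
    (∀ i, g i ∣ 1 + (∑ j, (X : Polynomial (ZMod 2)) ^ e j) + X ^ (ew % pord (g i))) ∧
      ∀ i j, (ew % pord (g i)) ≡ (ew % pord (g j))
        [MOD Nat.gcd (pord (g i)) (pord (g j))] := by
  constructor
  · intro i
    obtain ⟨hposi, hdvdi⟩ := pord_spec (g i) (h0 i)
    have hgp : g i ∣ p := by
      rw [hp]; exact Finset.dvd_prod_of_mem _ (Finset.mem_univ i)
    have hgi : g i ∣ 1 + (∑ j, (X : Polynomial (ZMod 2)) ^ e j) + X ^ ew :=
      hgp.trans hdvd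
    have hdvdi' : g i ∣ (X : Polynomial (ZMod 2)) ^ (pord (g i)) - 1 := by
      rwa [CharTwo.sub_eq_add]
    have key : g i ∣ (X : Polynomial (ZMod 2)) ^ ew - X ^ (ew % pord (g i)) := by
      have hdec : pord (g i) * (ew / pord (g i)) + ew % pord (g i) = ew :=
        Nat.div_add_mod ew (pord (g i))
      have hfact : (X : Polynomial (ZMod 2)) ^ ew - X ^ (ew % pord (g i))
          = ((X ^ (pord (g i))) ^ (ew / pord (g i)) - 1 ^ (ew / pord (g i)))
            * X ^ (ew % pord (g i)) := by
        rw [sub_mul, one_pow, one_mul, ← pow_mul, ← pow_add, hdec]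
      rw [hfact]
      exact Dvd.dvd.mul_right (hdvdi'.trans (sub_dvd_pow_sub_pow _ _ _)) _
    have h2 := dvd_sub hgi key
    have heq : 1 + (∑ j, (X : Polynomial (ZMod 2)) ^ e j) + X ^ (ew % pord (g i))
        = (1 + (∑ j, (X : Polynomial (ZMod 2)) ^ e j) + X ^ ew)
          - (X ^ ew - X ^ (ew % pord (g i))) := by ring
    rw [heq]; exact h2
  · intro i j
    have h1 : ew % pord (g i) ≡ ew [MOD Nat.gcd (pord (g i)) (pord (g j))] :=
      (Nat.mod_modEq ew (pord (g i))).of_dvd (Nat.gcd_dvd_left _ _)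
    have h2 : ew % pord (g j) ≡ ew [MOD Nat.gcd (pord (g i)) (pord (g j))] :=
      (Nat.mod_modEq ew (pord (g j))).of_dvd (Nat.gcd_dvd_right _ _)
    exact h1.trans h2.symm
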